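/- arXiv:1202.4654 — 2 statements merged into one kernel-verified Lean document; each statement's English description precedes it below -/
import Mathlib

section
/- Let p>1 and let N≥1 be an integer. The map S_p:C([0,1],ℝ)→C([0,1],ℝ) is continuous for the sup norms, positively homogeneous of degree p* (i.e. S_p(t·h)=t^{p*}S_p(h) for all t≥0 and h), maps bounded sets to bounded sets, and is compact into C^1: for every bounded set B⊂C([0,1],ℝ), every h∈B gives S_p(h)∈C^1([0,1],ℝ), and the set {(S_p(h),S_p(h)') : h∈B} has compact closure in C([0,1],ℝ)×C([0,1],ℝ) (product of sup norms). -/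
open Set MeasureTheory Filter Topology intervalIntegral

noncomputable section

/-- `phi p ξ = |ξ|^(p-2) ξ`, the function `φ_p`. -/
def phi (p ξ : ℝ) : ℝ := |ξ| ^ (p - 2) * ξ

/-- The (one-sided at endpoints) derivative of a function on `[0,1]`. -/
def deriv01 (u : ℝ → ℝ) (r : ℝ) : ℝ := derivWithin u (Set.Icc 0 1) r

/-- `u ∈ C^1([0,1],ℝ)`. -/
def C1on01 (u : ℝ → ℝ) : Prop :=
  (∀ r ∈ Set.Icc (0:ℝ) 1, DifferentiableWithinAt ℝ u (Set.Icc 0 1) r) ∧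
  ContinuousOn (deriv01 u) (Set.Icc 0 1)

/-- `J(h)(s) = ∫_0^s (t/s)^(N-1) h(t) dt`, with `J(h)(0) = 0`. -/
def Jmap (N : ℕ) (h : ℝ → ℝ) (s : ℝ) : ℝ :=
  if s = 0 then 0 else ∫ t in (0:ℝ)..s, (t / s) ^ (N - 1) * h t

/-- `S_p(h)(r) = ∫_r^1 φ_{p'}(J(h)(s)) ds` where `p' = p/(p-1)`. -/
def Sp (p : ℝ) (N : ℕ) (h : ℝ → ℝ) (r : ℝ) : ℝ :=
  ∫ s in r..(1:ℝ), phi (p / (p - 1)) (Jmap N h s)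

/-- The sup norm over `[0,1]`. -/
def norm0 (h : ℝ → ℝ) : ℝ := sSup ((fun t => |h t|) '' Set.Icc 0 1)

/-- `u` is not identically zero on `[0,1]`. -/
def Nontriv01 (u : ℝ → ℝ) : Prop := ∃ r ∈ Set.Icc (0:ℝ) 1, u r ≠ 0

/-- `(lam, u)` is a solution of problem (P):
`-(r^(N-1) φ_p(u'))' = lam r^(N-1) f(r, u(r))` on `(0,1)`, `u'(0) = u(1) = 0`. -/
def IsSolutionP (p : ℝ) (N : ℕ) (f : ℝ → ℝ → ℝ) (lam : ℝ) (u : ℝ → ℝ) : Prop :=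
  C1on01 u ∧ C1on01 (fun r => phi p (deriv01 u r)) ∧
  (∀ r ∈ Set.Ioo (0:ℝ) 1,
      HasDerivAt (fun s => s ^ (N - 1) * phi p (deriv01 u s))
        (-(lam * r ^ (N - 1) * f r (u r))) r) ∧
  deriv01 u 0 = 0 ∧ u 1 = 0

/-- `(lam, v)` is a principal eigenpair for the weight `w`. -/
def IsPrincipalEigenpair (p : ℝ) (N : ℕ) (w : ℝ → ℝ) (lam : ℝ) (v : ℝ → ℝ) : Prop :=
  0 < lam ∧ C1on01 v ∧ C1on01 (fun r => phi p (deriv01 v r)) ∧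
  (∀ r ∈ Set.Ico (0:ℝ) 1, 0 < v r) ∧
  (∀ r ∈ Set.Ioo (0:ℝ) 1,
      HasDerivAt (fun s => s ^ (N - 1) * phi p (deriv01 v s))
        (-(lam * r ^ (N - 1) * w r * phi p (v r))) r) ∧
  deriv01 v 0 = 0 ∧ v 1 = 0

/-- Extension of a continuous function on `[0,1]` to `ℝ` (constant outside `[0,1]`). -/
def extCI (g : C(Set.Icc (0:ℝ) 1, ℝ)) : ℝ → ℝ := Set.IccExtend zero_le_one ⇑g

/-! ### Auxiliary lemmas -/

lemma abs_phi (q x : ℝ) (hq : q - 1 ≠ 0) : |phi q x| = |x| ^ (q - 1) := by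
  rcases eq_or_ne x 0 with rfl | hx
  · simp [phi, Real.zero_rpow hq]
  · have h0 : (0:ℝ) < |x| := abs_pos.2 hx
    rw [phi, abs_mul, abs_of_nonneg (Real.rpow_nonneg (abs_nonneg x) _),
      show q - 1 = (q - 2) + 1 by ring, Real.rpow_add_one (ne_of_gt h0)]

lemma abs_phi_le {q x R : ℝ} (hq : 0 < q - 1) (hx : |x| ≤ R) : |phi q x| ≤ R ^ (q - 1) := by
  rw [abs_phi q x (ne_of_gt hq)]
  exact Real.rpow_le_rpow (abs_nonneg x) hx hq.le

lemma phi_continuous {q : ℝ} (hq : 0 < q - 1) : Continuous (phi q) := by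
  rw [continuous_iff_continuousAt]
  intro x
  rcases eq_or_ne x 0 with rfl | hx
  · have h1 : Tendsto (fun y : ℝ => |y| ^ (q - 1)) (𝓝 0) (𝓝 0) := by
      have := (continuous_abs.continuousAt (x := (0:ℝ))).rpow_const (Or.inr hq.le)
      simpa [ContinuousAt, Real.zero_rpow (ne_of_gt hq)] using this
    have h2 : Tendsto (phi q) (𝓝 0) (𝓝 0) :=
      squeeze_zero_norm (fun y => by rw [Real.norm_eq_abs, abs_phi q y (ne_of_gt hq)]) h1
    simpa [ContinuousAt, phi] using h2
  · exact ((continuous_abs.continuousAt.rpow_const (Or.inl (abs_ne_zero.2 hx))).mul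
      continuousAt_id)

lemma phi_homog {q : ℝ} (hq : 0 < q - 1) {t : ℝ} (ht : 0 ≤ t) (x : ℝ) :
    phi q (t * x) = t ^ (q - 1) * phi q x := by
  rcases eq_or_lt_of_le ht with rfl | ht'
  · simp [phi, Real.zero_rpow (ne_of_gt hq)]
  · unfold phi
    rw [abs_mul, abs_of_pos ht', Real.mul_rpow ht'.le (abs_nonneg x),
      show q - 1 = (q - 2) + 1 by ring, Real.rpow_add_one (ne_of_gt ht')]
    ring

lemma Jmap_integrand_intble {h : ℝ → ℝ} (hh : ContinuousOn h (Icc 0 1)) {a b : ℝ} (s : ℝ)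
    (hab : uIcc a b ⊆ Icc 0 1) (n : ℕ) :
    IntervalIntegrable (fun t => (t / s) ^ n * h t) volume a b :=
  (((continuous_id.div_const s).pow n).continuousOn.mul (hh.mono hab)).intervalIntegrable

lemma pow_integrand_intble {h : ℝ → ℝ} (hh : ContinuousOn h (Icc 0 1)) {a b : ℝ}
    (hab : uIcc a b ⊆ Icc 0 1) (n : ℕ) :
    IntervalIntegrable (fun t => t ^ n * h t) volume a b :=
  ((continuous_pow n).continuousOn.mul (hh.mono hab)).intervalIntegrable

lemma uIcc_subset_Icc01 {a b : ℝ} (ha : a ∈ Icc (0:ℝ) 1) (hb : b ∈ Icc (0:ℝ) 1) :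
    uIcc a b ⊆ Icc 0 1 := by
  rw [uIcc]
  exact Icc_subset_Icc (le_min ha.1 hb.1) (max_le ha.2 hb.2)

lemma Jmap_abs_le {h : ℝ → ℝ} {C : ℝ} (hC : ∀ t ∈ Icc (0:ℝ) 1, |h t| ≤ C) {s : ℝ}
    (hs : s ∈ Icc (0:ℝ) 1) (N : ℕ) : |Jmap N h s| ≤ C * s := by
  have hC0 : 0 ≤ C := (abs_nonneg _).trans (hC 0 ⟨le_refl _, zero_le_one⟩)
  rcases eq_or_ne s 0 with rfl | hs0
  · simp [Jmap]
  · have hs' : 0 < s := lt_of_le_of_ne hs.1 (Ne.symm hs0)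
    rw [Jmap, if_neg hs0]
    have hb : ∀ t ∈ Set.uIoc (0:ℝ) s, ‖(t / s) ^ (N - 1) * h t‖ ≤ C := by
      intro t ht
      rw [Set.uIoc_of_le hs'.le] at ht
      have ht1 : t ∈ Icc (0:ℝ) 1 := ⟨ht.1.le, ht.2.trans hs.2⟩
      rw [Real.norm_eq_abs, abs_mul]
      have h1 : |(t / s) ^ (N - 1)| ≤ 1 := by
        rw [abs_pow]
        apply pow_le_one₀ (abs_nonneg _)
        rw [abs_div, abs_of_pos hs', abs_of_nonneg ht.1.le]
        exact div_le_one_of_le₀ ht.2 hs'.le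
      calc |(t / s) ^ (N - 1)| * |h t| ≤ 1 * C :=
            mul_le_mul h1 (hC t ht1) (abs_nonneg _) zero_le_one
        _ = C := one_mul C
    have := intervalIntegral.norm_integral_le_of_norm_le_const hb
    rwa [Real.norm_eq_abs, sub_zero, abs_of_pos hs'] at this

lemma Jmap_sub {g h : ℝ → ℝ} (hg : ContinuousOn g (Icc 0 1)) (hh : ContinuousOn h (Icc 0 1))
    {s : ℝ} (hs : s ∈ Icc (0:ℝ) 1) (N : ℕ) :
    Jmap N g s - Jmap N h s = Jmap N (fun t => g t - h t) s := by
  rcases eq_or_ne s 0 with rfl | hs0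
  · simp [Jmap]
  · have hsub : uIcc (0:ℝ) s ⊆ Icc 0 1 := uIcc_subset_Icc01 ⟨le_refl _, zero_le_one⟩ hs
    rw [Jmap, Jmap, Jmap, if_neg hs0, if_neg hs0, if_neg hs0,
      ← intervalIntegral.integral_sub (Jmap_integrand_intble hg s hsub _)
        (Jmap_integrand_intble hh s hsub _)]
    exact intervalIntegral.integral_congr fun t _ => by ring

lemma Jmap_const_mul (N : ℕ) (h : ℝ → ℝ) (c s : ℝ) :
    Jmap N (fun t => c * h t) s = c * Jmap N h s := by
  rcases eq_or_ne s 0 with rfl | hs0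
  · simp [Jmap]
  · rw [Jmap, Jmap, if_neg hs0, if_neg hs0, ← intervalIntegral.integral_const_mul]
    exact intervalIntegral.integral_congr fun t _ => by ring

lemma Jmap_eq (N : ℕ) (h : ℝ → ℝ) {s : ℝ} (hs : s ≠ 0) :
    Jmap N h s = (s ^ (N - 1))⁻¹ * ∫ t in (0:ℝ)..s, t ^ (N - 1) * h t := by
  rw [Jmap, if_neg hs, ← intervalIntegral.integral_const_mul]
  refine intervalIntegral.integral_congr fun t _ => ?_
  rw [div_pow]
  ring
lemma Jmap_lip {h : ℝ → ℝ} {C : ℝ} (hh : ContinuousOn h (Icc 0 1))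
    (hC : ∀ t ∈ Icc (0:ℝ) 1, |h t| ≤ C) {N : ℕ} (hN : 1 ≤ N) {s' s : ℝ}
    (hs'0 : 0 ≤ s') (h12 : s' ≤ s) (hs1 : s ≤ 1) :
    |Jmap N h s - Jmap N h s'| ≤ C * N * (s - s') := by
  have hC0 : 0 ≤ C := (abs_nonneg _).trans (hC 0 ⟨le_refl _, zero_le_one⟩)
  have hN1 : (1:ℝ) ≤ (N:ℝ) := by exact_mod_cast hN
  rcases eq_or_lt_of_le hs'0 with hs'eq | hs'pos
  · -- s' = 0
    rcases eq_or_lt_of_le (hs'eq.trans_le h12 : (0:ℝ) ≤ s) with hseq | hspos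
    · simp [Jmap, ← hs'eq, ← hseq]
    · have h1 : |Jmap N h s - Jmap N h s'| = |Jmap N h s| := by
        rw [← hs'eq]; simp [Jmap]
      rw [h1, ← hs'eq, sub_zero]
      calc |Jmap N h s| ≤ C * s := Jmap_abs_le hC ⟨hspos.le, hs1⟩ N
        _ ≤ C * N * s := by nlinarith [mul_le_mul_of_nonneg_right (mul_le_mul_of_nonneg_left hN1 hC0) hspos.le]
  · -- 0 < s'
    have hspos : 0 < s := hs'pos.trans_le h12
    set n := N - 1 with hn
    have hNn : (N:ℝ) = (n:ℝ) + 1 := by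
      have : n + 1 = N := by omega
      exact_mod_cast (this.symm ▸ rfl : (N:ℝ) = ((n+1 : ℕ):ℝ))
    set a := s ^ n with ha
    set b := s' ^ n with hb
    have hapos : 0 < a := pow_pos hspos n
    have hbpos : 0 < b := pow_pos hs'pos n
    have hba : b ≤ a := pow_le_pow_left₀ hs'0 h12 n
    set I : ℝ → ℝ := fun x => ∫ t in (0:ℝ)..x, t ^ n * h t with hI
    have hint1 : IntervalIntegrable (fun t => t ^ n * h t) volume 0 s' :=
      pow_integrand_intble hh (uIcc_subset_Icc01 ⟨le_refl _, zero_le_one⟩ ⟨hs'0, h12.trans hs1⟩) n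
    have hint2 : IntervalIntegrable (fun t => t ^ n * h t) volume s' s :=
      pow_integrand_intble hh (uIcc_subset_Icc01 ⟨hs'0, h12.trans hs1⟩ ⟨hs'0.trans h12, hs1⟩) n
    have hadj : I s' + ∫ t in s'..s, t ^ n * h t = I s :=
      intervalIntegral.integral_add_adjacent_intervals hint1 hint2
    set A := ∫ t in s'..s, t ^ n * h t with hA
    set B := I s' with hB
    have key : Jmap N h s - Jmap N h s' = a⁻¹ * A + (a⁻¹ - b⁻¹) * B := by
      rw [Jmap_eq N h (ne_of_gt hspos), Jmap_eq N h (ne_of_gt hs'pos), ← hn, ← ha, ← hb]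
      rw [show (∫ t in (0:ℝ)..s, t ^ n * h t) = I s from rfl, ← hadj]
      ring
    have hAbound : |A| ≤ C * a * (s - s') := by
      have hb : ∀ t ∈ Set.uIoc s' s, ‖t ^ n * h t‖ ≤ C * a := by
        intro t ht
        rw [Set.uIoc_of_le h12] at ht
        have ht1 : t ∈ Icc (0:ℝ) 1 := ⟨hs'0.trans ht.1.le, ht.2.trans hs1⟩
        rw [Real.norm_eq_abs, abs_mul, abs_pow, abs_of_nonneg ht1.1]
        calc t ^ n * |h t| ≤ a * C :=
              mul_le_mul (pow_le_pow_left₀ ht1.1 ht.2 n) (hC t ht1) (abs_nonneg _)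
                hapos.le
          _ = C * a := mul_comm _ _
      have := intervalIntegral.norm_integral_le_of_norm_le_const hb
      rwa [Real.norm_eq_abs, abs_of_nonneg (sub_nonneg.2 h12)] at this
    have hBbound : |B| ≤ C * b * s' := by
      have hb2 : ∀ t ∈ Set.uIoc 0 s', ‖t ^ n * h t‖ ≤ C * b := by
        intro t ht
        rw [Set.uIoc_of_le hs'0] at ht
        have ht1 : t ∈ Icc (0:ℝ) 1 := ⟨ht.1.le, ht.2.trans (h12.trans hs1)⟩
        rw [Real.norm_eq_abs, abs_mul, abs_pow, abs_of_nonneg ht1.1]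
        calc t ^ n * |h t| ≤ b * C :=
              mul_le_mul (pow_le_pow_left₀ ht1.1 ht.2 n) (hC t ht1) (abs_nonneg _) hbpos.le
          _ = C * b := mul_comm _ _
      have := intervalIntegral.norm_integral_le_of_norm_le_const hb2
      rwa [Real.norm_eq_abs, sub_zero, abs_of_nonneg hs'0] at this
    -- Bernoulli: 1 - (s'/s)^n ≤ n * (1 - s'/s)
    have hu1 : s' / s ≤ 1 := div_le_one_of_le₀ h12 hspos.le
    have hu0 : 0 ≤ s' / s := div_nonneg hs'0 hspos.le
    have hbern : 1 - (s' / s) ^ n ≤ (n:ℝ) * (1 - s' / s) := by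
      have := one_add_mul_le_pow (a := s' / s - 1) (by linarith) n
      have h2 : (1 + (s' / s - 1)) ^ n = (s' / s) ^ n := by ring_nf
      nlinarith [this]
    have hdivpow : (s' / s) ^ n = b / a := by rw [div_pow]
    -- assemble
    have step1 : |Jmap N h s - Jmap N h s'| ≤ a⁻¹ * |A| + (b⁻¹ - a⁻¹) * |B| := by
      rw [key]
      calc |a⁻¹ * A + (a⁻¹ - b⁻¹) * B| ≤ |a⁻¹ * A| + |(a⁻¹ - b⁻¹) * B| := abs_add_le _ _
        _ = a⁻¹ * |A| + (b⁻¹ - a⁻¹) * |B| := by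
            rw [abs_mul, abs_mul, abs_of_nonneg (inv_nonneg.2 hapos.le), abs_sub_comm,
              abs_of_nonneg (sub_nonneg.2 (inv_anti₀ hbpos hba))]
    have step2 : a⁻¹ * |A| ≤ C * (s - s') := by
      calc a⁻¹ * |A| ≤ a⁻¹ * (C * a * (s - s')) := by
            apply mul_le_mul_of_nonneg_left hAbound (inv_nonneg.2 hapos.le)
        _ = C * (s - s') := by
            field_simp
    have step3 : (b⁻¹ - a⁻¹) * |B| ≤ C * (n:ℝ) * (s - s') := by
      have h1 : (b⁻¹ - a⁻¹) * |B| ≤ (b⁻¹ - a⁻¹) * (C * b * s') := by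
        apply mul_le_mul_of_nonneg_left hBbound
        exact sub_nonneg.2 (inv_anti₀ hbpos hba)
      have h2 : (b⁻¹ - a⁻¹) * (C * b * s') = C * s' * (1 - b / a) := by
        field_simp
      have h3 : C * s' * (1 - b / a) ≤ C * s' * ((n:ℝ) * (1 - s' / s)) := by
        apply mul_le_mul_of_nonneg_left _ (mul_nonneg hC0 hs'0)
        rw [← hdivpow]
        exact hbern
      have h4 : C * s' * ((n:ℝ) * (1 - s' / s)) ≤ C * (n:ℝ) * (s - s') := by
        have hss' : s' * (1 - s' / s) ≤ s - s' := by
          have : s * (1 - s' / s) = s - s' := by field_simp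
          nlinarith [mul_le_mul_of_nonneg_right h12 (sub_nonneg.2 hu1)]
        calc C * s' * ((n:ℝ) * (1 - s' / s)) = C * (n:ℝ) * (s' * (1 - s' / s)) := by ring
          _ ≤ C * (n:ℝ) * (s - s') := by
              apply mul_le_mul_of_nonneg_left hss'
              positivity
      linarith
    calc |Jmap N h s - Jmap N h s'| ≤ a⁻¹ * |A| + (b⁻¹ - a⁻¹) * |B| := step1
      _ ≤ C * (s - s') + C * (n:ℝ) * (s - s') := add_le_add step2 step3
      _ = C * ((n:ℝ) + 1) * (s - s') := by ring
      _ = C * N * (s - s') := by rw [hNn]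



lemma Jmap_lipOn {h : ℝ → ℝ} {C : ℝ} (hh : ContinuousOn h (Icc 0 1))
    (hC : ∀ t ∈ Icc (0:ℝ) 1, |h t| ≤ C) {N : ℕ} (hN : 1 ≤ N) :
    LipschitzOnWith (Real.toNNReal (C * N)) (Jmap N h) (Icc 0 1) := by
  have hC0 : 0 ≤ C := (abs_nonneg _).trans (hC 0 ⟨le_refl _, zero_le_one⟩)
  rw [lipschitzOnWith_iff_dist_le_mul]
  intro x hx y hy
  rw [Real.dist_eq, Real.dist_eq, Real.coe_toNNReal _ (by positivity)]
  rcases le_total y x with hxy | hxy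
  · have := Jmap_lip hh hC hN hy.1 hxy hx.2
    rwa [abs_of_nonneg (sub_nonneg.2 hxy)]
  · have := Jmap_lip hh hC hN hx.1 hxy hy.2
    rw [abs_sub_comm, abs_sub_comm x y]
    rwa [abs_of_nonneg (sub_nonneg.2 hxy)]

lemma Jmap_contOn {h : ℝ → ℝ} (hh : ContinuousOn h (Icc 0 1)) {N : ℕ} (hN : 1 ≤ N) :
    ContinuousOn (Jmap N h) (Icc 0 1) := by
  obtain ⟨C, hC⟩ := isCompact_Icc.exists_bound_of_continuousOn hh
  exact (Jmap_lipOn hh (fun t ht => hC t ht) hN).continuousOn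
lemma q_sub_one_pos {p : ℝ} (hp : 1 < p) : 0 < p / (p - 1) - 1 := by
  have h1 : 0 < p - 1 := by linarith
  have : p / (p - 1) - 1 = 1 / (p - 1) := by field_simp; ring
  rw [this]
  positivity

lemma q_sub_one_eq {p : ℝ} (hp : 1 < p) : p / (p - 1) - 1 = 1 / (p - 1) := by
  have h1 : p - 1 ≠ 0 := by intro h; nlinarith [h]
  field_simp
  ring

section SpLemmas

variable {p : ℝ} (hp : 1 < p) {N : ℕ} (hN : 1 ≤ N) {h : ℝ → ℝ}
  (hh : ContinuousOn h (Icc 0 1))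
include hp hN hh

lemma F_contOn : ContinuousOn (fun s => phi (p / (p - 1)) (Jmap N h s)) (Icc 0 1) :=
  (phi_continuous (q_sub_one_pos hp)).comp_continuousOn (Jmap_contOn hh hN)

lemma F_intble {a b : ℝ} (ha : a ∈ Icc (0:ℝ) 1) (hb : b ∈ Icc (0:ℝ) 1) :
    IntervalIntegrable (fun s => phi (p / (p - 1)) (Jmap N h s)) volume a b :=
  ((F_contOn hp hN hh).mono (uIcc_subset_Icc01 ha hb)).intervalIntegrable

lemma Sp_hasDeriv {r : ℝ} (hr : r ∈ Icc (0:ℝ) 1) :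
    HasDerivWithinAt (Sp p N h) (-(phi (p / (p - 1)) (Jmap N h r))) (Icc 0 1) r := by
  haveI : Fact (r ∈ Icc (0:ℝ) 1) := ⟨hr⟩
  exact intervalIntegral.integral_hasDerivWithinAt_left
    (F_intble hp hN hh hr ⟨zero_le_one, le_refl _⟩)
    ((F_contOn hp hN hh).stronglyMeasurableAtFilter_nhdsWithin measurableSet_Icc r)
    ((F_contOn hp hN hh) r hr)

lemma deriv01_Sp {r : ℝ} (hr : r ∈ Icc (0:ℝ) 1) :
    derivWithin (Sp p N h) (Icc 0 1) r = -(phi (p / (p - 1)) (Jmap N h r)) :=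
  (Sp_hasDeriv hp hN hh hr).derivWithin ((uniqueDiffOn_Icc one_pos) r hr)

lemma Sp_abs_le {C : ℝ} (hC : ∀ t ∈ Icc (0:ℝ) 1, |h t| ≤ C) {r : ℝ} (hr : r ∈ Icc (0:ℝ) 1) :
    |Sp p N h r| ≤ C ^ (p / (p - 1) - 1) := by
  have hC0 : 0 ≤ C := (abs_nonneg _).trans (hC 0 ⟨le_refl _, zero_le_one⟩)
  have hb : ∀ s ∈ Set.uIoc r 1, ‖phi (p / (p - 1)) (Jmap N h s)‖ ≤ C ^ (p / (p - 1) - 1) := by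
    intro s hs
    rw [Set.uIoc_of_le hr.2] at hs
    have hs1 : s ∈ Icc (0:ℝ) 1 := ⟨hr.1.trans hs.1.le, hs.2⟩
    rw [Real.norm_eq_abs]
    refine abs_phi_le (q_sub_one_pos hp) ?_
    calc |Jmap N h s| ≤ C * s := Jmap_abs_le hC hs1 N
      _ ≤ C := by nlinarith [hs1.1, hs1.2]
  have := intervalIntegral.norm_integral_le_of_norm_le_const hb
  rw [Real.norm_eq_abs] at this
  calc |Sp p N h r| ≤ C ^ (p / (p - 1) - 1) * |1 - r| := this
    _ ≤ C ^ (p / (p - 1) - 1) * 1 := by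
        apply mul_le_mul_of_nonneg_left _ (Real.rpow_nonneg hC0 _)
        rw [abs_of_nonneg (by linarith [hr.2])]
        linarith [hr.1]
    _ = C ^ (p / (p - 1) - 1) := mul_one _

lemma Sp_lipOn {C : ℝ} (hC : ∀ t ∈ Icc (0:ℝ) 1, |h t| ≤ C) :
    LipschitzOnWith (Real.toNNReal (C ^ (p / (p - 1) - 1))) (Sp p N h) (Icc 0 1) := by
  have hC0 : 0 ≤ C := (abs_nonneg _).trans (hC 0 ⟨le_refl _, zero_le_one⟩)
  have key : ∀ r' ∈ Icc (0:ℝ) 1, ∀ r ∈ Icc (0:ℝ) 1, r' ≤ r →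
      |Sp p N h r - Sp p N h r'| ≤ C ^ (p / (p - 1) - 1) * (r - r') := by
    intro r' hr' r hr hrr
    have hadj : (∫ s in r'..r, phi (p / (p - 1)) (Jmap N h s)) + Sp p N h r = Sp p N h r' :=
      intervalIntegral.integral_add_adjacent_intervals (F_intble hp hN hh hr' hr)
        (F_intble hp hN hh hr ⟨zero_le_one, le_refl _⟩)
    have hb : ∀ s ∈ Set.uIoc r' r, ‖phi (p / (p - 1)) (Jmap N h s)‖ ≤
        C ^ (p / (p - 1) - 1) := by
      intro s hs
      rw [Set.uIoc_of_le hrr] at hs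
      have hs1 : s ∈ Icc (0:ℝ) 1 := ⟨hr'.1.trans hs.1.le, hs.2.trans hr.2⟩
      rw [Real.norm_eq_abs]
      refine abs_phi_le (q_sub_one_pos hp) ?_
      calc |Jmap N h s| ≤ C * s := Jmap_abs_le hC hs1 N
        _ ≤ C := by nlinarith [hs1.1, hs1.2]
    have := intervalIntegral.norm_integral_le_of_norm_le_const hb
    rw [Real.norm_eq_abs, abs_of_nonneg (sub_nonneg.2 hrr)] at this
    calc |Sp p N h r - Sp p N h r'| = |∫ s in r'..r, phi (p / (p - 1)) (Jmap N h s)| := by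
          rw [← hadj]; rw [abs_sub_comm]; congr 1; ring
      _ ≤ C ^ (p / (p - 1) - 1) * (r - r') := this
  rw [lipschitzOnWith_iff_dist_le_mul]
  intro x hx y hy
  rw [Real.dist_eq, Real.dist_eq,
    Real.coe_toNNReal _ (Real.rpow_nonneg hC0 _)]
  rcases le_total y x with hxy | hxy
  · have := key y hy x hx hxy
    rwa [abs_of_nonneg (sub_nonneg.2 hxy)]
  · have := key x hx y hy hxy
    rw [abs_sub_comm, abs_sub_comm x y]
    rwa [abs_of_nonneg (sub_nonneg.2 hxy)]

end SpLemmas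
def LipBall (L : NNReal) (R : ℝ) : Set C(Set.Icc (0:ℝ) 1, ℝ) :=
  {u | LipschitzWith L u ∧ ‖u‖ ≤ R}

lemma isCompact_LipBall (L : NNReal) {R : ℝ} (hR : 0 ≤ R) : IsCompact (LipBall L R) := by
  apply ArzelaAscoli.isCompact_of_equicontinuous
  · -- pointwise compactness of the image
    have himg : ContinuousMap.toFun '' LipBall L R =
        {f : Set.Icc (0:ℝ) 1 → ℝ | (∀ x y, dist (f x) (f y) ≤ (L:ℝ) * dist x y) ∧
          ∀ x, f x ∈ Icc (-R) R} := by
      ext f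
      constructor
      · rintro ⟨u, ⟨hu1, hu2⟩, rfl⟩
        refine ⟨fun x y => hu1.dist_le_mul x y, fun x => ?_⟩
        rw [mem_Icc, ← abs_le]
        exact (u.norm_coe_le_norm x).trans hu2
      · rintro ⟨h1, h2⟩
        have hlip : LipschitzWith L f := LipschitzWith.of_dist_le_mul h1
        refine ⟨⟨f, hlip.continuous⟩, ⟨hlip, ?_⟩, rfl⟩
        rw [ContinuousMap.norm_le _ hR]
        intro x
        rw [Real.norm_eq_abs, abs_le, ← mem_Icc]
        exact h2 x
    rw [himg]
    apply IsCompact.of_isClosed_subset (isCompact_univ_pi fun _ => isCompact_Icc)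
    · have c1 : IsClosed {f : Set.Icc (0:ℝ) 1 → ℝ |
          ∀ x y, dist (f x) (f y) ≤ (L:ℝ) * dist x y} := by
        have : {f : Set.Icc (0:ℝ) 1 → ℝ | ∀ x y, dist (f x) (f y) ≤ (L:ℝ) * dist x y} =
            ⋂ x, ⋂ y, {f | dist (f x) (f y) ≤ (L:ℝ) * dist x y} := by
          ext f
          simp only [mem_setOf_eq, mem_iInter]
        rw [this]
        exact isClosed_iInter fun x => isClosed_iInter fun y =>
          isClosed_le ((continuous_apply x).dist (continuous_apply y)) continuous_const
      have c2 : IsClosed {f : Set.Icc (0:ℝ) 1 → ℝ | ∀ x, f x ∈ Icc (-R) R} := by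
        have : {f : Set.Icc (0:ℝ) 1 → ℝ | ∀ x, f x ∈ Icc (-R) R} =
            ⋂ x, {f | f x ∈ Icc (-R) R} := by
          ext f
          simp only [mem_setOf_eq, mem_iInter]
        rw [this]
        exact isClosed_iInter fun x => isClosed_Icc.preimage (continuous_apply x)
      exact c1.inter c2
    · intro f hf
      exact fun x _ => hf.2 x
  · -- equicontinuity
    apply Metric.equicontinuous_of_continuity_modulus (fun d => (L:ℝ) * d)
    · have : Tendsto (fun d : ℝ => (L:ℝ) * d) (𝓝 0) (𝓝 ((L:ℝ) * 0)) :=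
        (continuous_const.mul continuous_id).tendsto 0
      simpa using this
    · intro x y u
      exact u.2.1.dist_le_mul x y

/-- `S_p` is continuous (sup norms), positively homogeneous of degree
`p* = 1/(p-1)`, maps bounded sets to bounded sets, and is compact into `C^1`. -/
theorem stmt_3 (p : ℝ) (hp : 1 < p) (N : ℕ) (hN : 1 ≤ N) :
    -- continuity at every point, for the sup norms on [0,1]
    (∀ h : ℝ → ℝ, ContinuousOn h (Set.Icc 0 1) → ∀ ε > 0, ∃ δ > 0,
      ∀ g : ℝ → ℝ, ContinuousOn g (Set.Icc 0 1) →
        (∀ t ∈ Set.Icc (0:ℝ) 1, |g t - h t| ≤ δ) →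
        ∀ r ∈ Set.Icc (0:ℝ) 1, |Sp p N g r - Sp p N h r| ≤ ε) ∧
    -- positive homogeneity of degree p* = 1/(p-1)
    (∀ t : ℝ, 0 ≤ t → ∀ h : ℝ → ℝ, ContinuousOn h (Set.Icc 0 1) →
      ∀ r ∈ Set.Icc (0:ℝ) 1,
        Sp p N (fun x => t * h x) r = t ^ (1 / (p - 1)) * Sp p N h r) ∧
    -- maps bounded sets to bounded sets
    (∀ C : ℝ, ∃ C' : ℝ, ∀ h : ℝ → ℝ, ContinuousOn h (Set.Icc 0 1) →
      (∀ t ∈ Set.Icc (0:ℝ) 1, |h t| ≤ C) →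
      ∀ r ∈ Set.Icc (0:ℝ) 1, |Sp p N h r| ≤ C') ∧
    -- S_p(h) ∈ C^1([0,1])
    (∀ h : ℝ → ℝ, ContinuousOn h (Set.Icc 0 1) → C1on01 (Sp p N h)) ∧
    -- compactness into C^1: the image of a bounded set, together with derivatives,
    -- is contained in a compact subset of C([0,1]) × C([0,1])
    (∀ C : ℝ, ∃ K : Set (C(Set.Icc (0:ℝ) 1, ℝ) × C(Set.Icc (0:ℝ) 1, ℝ)),
      IsCompact K ∧
      ∀ h : C(Set.Icc (0:ℝ) 1, ℝ), ‖h‖ ≤ C → ∃ g ∈ K,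
        (∀ r : Set.Icc (0:ℝ) 1, g.1 r = Sp p N (extCI h) r) ∧
        (∀ r : Set.Icc (0:ℝ) 1, g.2 r = deriv01 (Sp p N (extCI h)) r)) := by
  have hq := q_sub_one_pos hp
  refine ⟨?_, ?_, ?_, ?_, ?_⟩
  · -- continuity
    intro h hh ε hε
    obtain ⟨C₀, hC₀⟩ := isCompact_Icc.exists_bound_of_continuousOn hh
    have hC₀' : ∀ t ∈ Icc (0:ℝ) 1, |h t| ≤ C₀ := fun t ht => by
      have := hC₀ t ht; rwa [Real.norm_eq_abs] at this
    have hC0 : 0 ≤ C₀ := (abs_nonneg _).trans (hC₀' 0 ⟨le_refl _, zero_le_one⟩)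
    have huc : UniformContinuousOn (phi (p / (p - 1))) (Icc (-(C₀ + 1)) (C₀ + 1)) :=
      isCompact_Icc.uniformContinuousOn_of_continuous (phi_continuous hq).continuousOn
    rw [Metric.uniformContinuousOn_iff] at huc
    obtain ⟨δ', hδ'pos, hδ'⟩ := huc ε hε
    refine ⟨min (δ' / 2) 1, by positivity, ?_⟩
    intro g hg hgh r hr
    have hδle : min (δ' / 2) 1 ≤ 1 := min_le_right _ _
    have hδle2 : min (δ' / 2) 1 ≤ δ' / 2 := min_le_left _ _
    have hgbound : ∀ t ∈ Icc (0:ℝ) 1, |g t| ≤ C₀ + 1 := by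
      intro t ht
      calc |g t| ≤ |g t - h t| + |h t| := by
            have := abs_add_le (g t - h t) (h t); simpa using this
        _ ≤ min (δ' / 2) 1 + C₀ := add_le_add (hgh t ht) (hC₀' t ht)
        _ ≤ C₀ + 1 := by linarith
    have key : ∀ s ∈ Icc (0:ℝ) 1,
        |phi (p / (p - 1)) (Jmap N g s) - phi (p / (p - 1)) (Jmap N h s)| ≤ ε := by
      intro s hs
      have hJg : |Jmap N g s| ≤ C₀ + 1 := by
        have := Jmap_abs_le hgbound hs N
        nlinarith [hs.1, hs.2]
      have hJh : |Jmap N h s| ≤ C₀ + 1 := by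
        have := Jmap_abs_le hC₀' hs N
        nlinarith [hs.1, hs.2]
      have hdiff : |Jmap N g s - Jmap N h s| < δ' := by
        rw [Jmap_sub hg hh hs N]
        have hsubb : ∀ t ∈ Icc (0:ℝ) 1, |g t - h t| ≤ min (δ' / 2) 1 := hgh
        have := Jmap_abs_le hsubb hs N
        calc |Jmap N (fun t => g t - h t) s| ≤ min (δ' / 2) 1 * s := this
          _ ≤ min (δ' / 2) 1 := by nlinarith [hs.1, hs.2, le_min (le_of_lt (half_pos hδ'pos)) zero_le_one]
          _ ≤ δ' / 2 := hδle2
          _ < δ' := by linarith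
      have hmemg : Jmap N g s ∈ Icc (-(C₀ + 1)) (C₀ + 1) := by rw [mem_Icc, ← abs_le]; exact hJg
      have hmemh : Jmap N h s ∈ Icc (-(C₀ + 1)) (C₀ + 1) := by rw [mem_Icc, ← abs_le]; exact hJh
      have := hδ' _ hmemg _ hmemh (by rwa [Real.dist_eq])
      rw [Real.dist_eq] at this
      exact this.le
    have hsub : Sp p N g r - Sp p N h r =
        ∫ s in r..1, (phi (p / (p - 1)) (Jmap N g s) - phi (p / (p - 1)) (Jmap N h s)) :=
      (intervalIntegral.integral_sub (F_intble hp hN hg hr ⟨zero_le_one, le_refl _⟩)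
        (F_intble hp hN hh hr ⟨zero_le_one, le_refl _⟩)).symm
    have hb : ∀ s ∈ Set.uIoc r 1,
        ‖phi (p / (p - 1)) (Jmap N g s) - phi (p / (p - 1)) (Jmap N h s)‖ ≤ ε := by
      intro s hs
      rw [Set.uIoc_of_le hr.2] at hs
      exact key s ⟨hr.1.trans hs.1.le, hs.2⟩
    have := intervalIntegral.norm_integral_le_of_norm_le_const hb
    rw [← hsub, Real.norm_eq_abs] at this
    calc |Sp p N g r - Sp p N h r| ≤ ε * |1 - r| := this
      _ ≤ ε * 1 := by
          apply mul_le_mul_of_nonneg_left _ hε.le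
          rw [abs_of_nonneg (by linarith [hr.2])]
          linarith [hr.1]
      _ = ε := mul_one ε
  · -- homogeneity
    intro t ht h hh r hr
    calc Sp p N (fun x => t * h x) r
        = ∫ s in r..1, t ^ (p / (p - 1) - 1) * phi (p / (p - 1)) (Jmap N h s) := by
          refine intervalIntegral.integral_congr fun s _ => ?_
          rw [Jmap_const_mul, phi_homog hq ht]
      _ = t ^ (p / (p - 1) - 1) * Sp p N h r := intervalIntegral.integral_const_mul _ _
      _ = t ^ (1 / (p - 1)) * Sp p N h r := by rw [q_sub_one_eq hp]
  · -- bounded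
    intro C
    refine ⟨|C| ^ (1 / (p - 1)), ?_⟩
    intro h hh hbound r hr
    have hC0 : 0 ≤ C := (abs_nonneg _).trans (hbound 0 ⟨le_refl _, zero_le_one⟩)
    have := Sp_abs_le hp hN hh hbound hr
    rwa [abs_of_nonneg hC0, ← q_sub_one_eq hp]
  · -- C¹
    intro h hh
    refine ⟨fun r hr => (Sp_hasDeriv hp hN hh hr).differentiableWithinAt, ?_⟩
    exact ((F_contOn hp hN hh).neg).congr fun r hr => deriv01_Sp hp hN hh hr
  · -- compactness
    intro C
    set D : ℝ := max C 0 with hD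
    have hD0 : 0 ≤ D := le_max_right _ _
    have hR₁0 : 0 ≤ D ^ (p / (p - 1) - 1) := Real.rpow_nonneg hD0 _
    let ψ : C(ℝ, ℝ) := ⟨fun x => -(phi (p / (p - 1)) x), (phi_continuous hq).neg⟩
    refine ⟨(LipBall (Real.toNNReal (D ^ (p / (p - 1) - 1))) (D ^ (p / (p - 1) - 1))) ×ˢ
      ((fun u => ψ.comp u) '' LipBall (Real.toNNReal (D * N)) D),
      (isCompact_LipBall _ hR₁0).prod
        ((isCompact_LipBall _ hD0).image (ContinuousMap.continuous_postcomp ψ)), ?_⟩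
    intro h hnorm
    have hcont : Continuous (extCI h) := (map_continuous h).comp continuous_projIcc
    have hcont' : ContinuousOn (extCI h) (Icc 0 1) := hcont.continuousOn
    have hbound : ∀ t ∈ Icc (0:ℝ) 1, |extCI h t| ≤ D := by
      intro t ht
      calc |extCI h t| = ‖h (projIcc 0 1 zero_le_one t)‖ := rfl
        _ ≤ ‖h‖ := h.norm_coe_le_norm _
        _ ≤ D := hnorm.trans (le_max_left _ _)
    have hSlip : LipschitzOnWith (Real.toNNReal (D ^ (p / (p - 1) - 1)))
        (Sp p N (extCI h)) (Icc 0 1) := Sp_lipOn hp hN hcont' hbound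
    let u₁ : C(Set.Icc (0:ℝ) 1, ℝ) :=
      ⟨(Set.Icc (0:ℝ) 1).restrict (Sp p N (extCI h)), hSlip.to_restrict.continuous⟩
    have hu₁ : u₁ ∈ LipBall (Real.toNNReal (D ^ (p / (p - 1) - 1))) (D ^ (p / (p - 1) - 1)) := by
      refine ⟨hSlip.to_restrict, ?_⟩
      rw [ContinuousMap.norm_le _ hR₁0]
      intro x
      exact Sp_abs_le hp hN hcont' hbound x.2
    have hJlip : LipschitzOnWith (Real.toNNReal (D * N)) (Jmap N (extCI h)) (Icc 0 1) :=
      Jmap_lipOn hcont' hbound hN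
    let j : C(Set.Icc (0:ℝ) 1, ℝ) :=
      ⟨(Set.Icc (0:ℝ) 1).restrict (Jmap N (extCI h)), hJlip.to_restrict.continuous⟩
    have hj : j ∈ LipBall (Real.toNNReal (D * N)) D := by
      refine ⟨hJlip.to_restrict, ?_⟩
      rw [ContinuousMap.norm_le _ hD0]
      intro x
      calc ‖j x‖ = |Jmap N (extCI h) x| := rfl
        _ ≤ D * (x : ℝ) := Jmap_abs_le hbound x.2 N
        _ ≤ D := by nlinarith [x.2.1, x.2.2]
    refine ⟨(u₁, ψ.comp j), ⟨hu₁, ⟨j, hj, rfl⟩⟩, fun r => rfl, fun r => ?_⟩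
    show -(phi (p / (p - 1)) (Jmap N (extCI h) r)) = deriv01 (Sp p N (extCI h)) r
    exact (deriv01_Sp hp hN hcont' r.2).symm
end
end

section
/- Let p>1, let N≥1 be an integer, and let f:[0,1]×ℝ→ℝ be continuous with f(r,ξ)>0 for all r∈[0,1] and ξ≠0, and f(r,0)=0 for all r∈[0,1]. Let (λ,u) be a nontrivial solution of (P) with λ>0. Then u(r)>0 for all r∈[0,1), u'(r)≤0 for all r∈[0,1] (so u is nonincreasing on [0,1]), and u'(1)<0. -/
open Set MeasureTheory Filter Topology intervalIntegral

noncomputable section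

lemma phi_zero' (p : ℝ) : phi p 0 = 0 := by simp [phi]

lemma phi_pos' (p : ℝ) {ξ : ℝ} (h : 0 < ξ) : 0 < phi p ξ :=
  mul_pos (Real.rpow_pos_of_pos (abs_pos.mpr (ne_of_gt h)) _) h

lemma phi_neg' (p : ℝ) {ξ : ℝ} (h : ξ < 0) : phi p ξ < 0 :=
  mul_neg_of_pos_of_neg (Real.rpow_pos_of_pos (abs_pos.mpr (ne_of_lt h)) _) h

lemma le_zero_of_phi_nonpos (p : ℝ) {ξ : ℝ} (h : phi p ξ ≤ 0) : ξ ≤ 0 := by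
  by_contra hc
  exact absurd h (not_le.mpr (phi_pos' p (lt_of_not_ge hc)))

lemma lt_zero_of_phi_neg (p : ℝ) {ξ : ℝ} (h : phi p ξ < 0) : ξ < 0 := by
  rcases lt_trichotomy ξ 0 with h1|h1|h1
  · exact h1
  · rw [h1, phi_zero'] at h; linarith
  · exact absurd h (not_lt.mpr (le_of_lt (phi_pos' p h1)))

lemma eq_zero_of_phi_eq_zero (p : ℝ) {ξ : ℝ} (h : phi p ξ = 0) : ξ = 0 := by
  rcases lt_trichotomy ξ 0 with h1|h1|h1
  · exact absurd h (ne_of_lt (phi_neg' p h1))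
  · exact h1
  · exact absurd h (ne_of_gt (phi_pos' p h1))

/-- positivity of nontrivial solutions when `f > 0` off `ξ = 0`:
`u > 0` on `[0,1)`, `u' ≤ 0` on `[0,1]`, and `u'(1) < 0`. -/
theorem stmt_8 (p : ℝ) (hp : 1 < p) (N : ℕ) (hN : 1 ≤ N)
    (f : ℝ → ℝ → ℝ)
    (hf_cont : ContinuousOn (fun q : ℝ × ℝ => f q.1 q.2) (Set.Icc 0 1 ×ˢ Set.univ))
    (hf_pos : ∀ r ∈ Set.Icc (0:ℝ) 1, ∀ ξ : ℝ, ξ ≠ 0 → 0 < f r ξ)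
    (hf_zero : ∀ r ∈ Set.Icc (0:ℝ) 1, f r 0 = 0)
    (lam : ℝ) (hlam : 0 < lam) (u : ℝ → ℝ)
    (hsol : IsSolutionP p N f lam u) (hnt : Nontriv01 u) :
    (∀ r ∈ Set.Ico (0:ℝ) 1, 0 < u r) ∧
    (∀ r ∈ Set.Icc (0:ℝ) 1, deriv01 u r ≤ 0) ∧
    deriv01 u 1 < 0 := by
  obtain ⟨hu, hphip, hode, hD0, hu1⟩ := hsol
  set D : ℝ → ℝ := deriv01 u with hD
  set g : ℝ → ℝ := fun s => s ^ (N - 1) * phi p (D s) with hg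
  -- continuity facts
  have hucont : ContinuousOn u (Set.Icc 0 1) := fun r hr => (hu.1 r hr).continuousWithinAt
  have hphicont : ContinuousOn (fun r => phi p (D r)) (Set.Icc 0 1) :=
    fun r hr => (hphip.1 r hr).continuousWithinAt
  have hgcont : ContinuousOn g (Set.Icc 0 1) :=
    ((continuous_pow (N-1)).continuousOn).mul hphicont
  have hg0 : g 0 = 0 := by
    simp only [hg]
    rw [hD0, phi_zero', mul_zero]
  -- f is nonnegative along u
  have hf_nonneg : ∀ r ∈ Set.Icc (0:ℝ) 1, 0 ≤ f r (u r) := by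
    intro r hr
    rcases eq_or_ne (u r) 0 with h|h
    · rw [h, hf_zero r hr]
    · exact le_of_lt (hf_pos r hr _ h)
  -- derivative of g on the interior
  have hgderiv : ∀ x ∈ Set.Ioo (0:ℝ) 1, deriv g x = -(lam * x ^ (N - 1) * f x (u x)) := by
    intro x hx
    exact (hode x hx).deriv
  have hgdiff : ∀ x ∈ Set.Ioo (0:ℝ) 1, DifferentiableAt ℝ g x := by
    intro x hx
    exact (hode x hx).differentiableAt
  -- g is antitone on [0,1]
  have hganti : AntitoneOn g (Set.Icc 0 1) := by
    apply antitoneOn_of_deriv_nonpos (convex_Icc 0 1) hgcont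
    · rw [interior_Icc]
      exact fun x hx => (hgdiff x hx).differentiableWithinAt
    · rw [interior_Icc]
      intro x hx
      rw [hgderiv x hx]
      have hx1 : (0:ℝ) < x ^ (N-1) := pow_pos hx.1 _
      have h2 := hf_nonneg x ⟨le_of_lt hx.1, le_of_lt hx.2⟩
      have := mul_nonneg (mul_nonneg hlam.le hx1.le) h2
      linarith
  -- deriv01 u ≤ 0 on [0,1]
  have hDle : ∀ r ∈ Set.Icc (0:ℝ) 1, D r ≤ 0 := by
    intro r hr
    rcases eq_or_lt_of_le hr.1 with h|h
    · rw [← h]; exact le_of_eq hD0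
    · have hgr : g r ≤ 0 := by
        have := hganti (Set.left_mem_Icc.mpr zero_le_one) hr (le_of_lt h)
        rw [hg0] at this; exact this
      have hrpow : (0:ℝ) < r ^ (N-1) := pow_pos h _
      have hphile : phi p (D r) ≤ 0 := by
        by_contra hc
        push_neg at hc
        have : 0 < g r := mul_pos hrpow hc
        linarith
      exact le_zero_of_phi_nonpos p hphile
  -- deriv01 u x = deriv u x for interior x, u differentiable there
  have hudiff : ∀ x ∈ Set.Ioo (0:ℝ) 1, DifferentiableAt ℝ u x := by
    intro x hx
    exact (hu.1 x ⟨le_of_lt hx.1, le_of_lt hx.2⟩).differentiableAt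
      (Icc_mem_nhds hx.1 hx.2)
  have hDeq : ∀ x ∈ Set.Ioo (0:ℝ) 1, D x = deriv u x := by
    intro x hx
    rw [hD]
    exact derivWithin_of_mem_nhds (Icc_mem_nhds hx.1 hx.2)
  -- u is antitone on [0,1]
  have huanti : AntitoneOn u (Set.Icc 0 1) := by
    apply antitoneOn_of_deriv_nonpos (convex_Icc 0 1) hucont
    · rw [interior_Icc]; exact fun x hx => (hudiff x hx).differentiableWithinAt
    · rw [interior_Icc]
      intro x hx
      rw [← hDeq x hx]
      exact hDle x ⟨le_of_lt hx.1, le_of_lt hx.2⟩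
  -- u ≥ 0 on [0,1]
  have hunn : ∀ r ∈ Set.Icc (0:ℝ) 1, 0 ≤ u r := by
    intro r hr
    have := huanti hr (Set.right_mem_Icc.mpr zero_le_one) hr.2
    rw [hu1] at this; exact this
  -- if u vanishes at some point of [0,1), contradiction
  have hkey : ∀ r₁ ∈ Set.Ico (0:ℝ) 1, u r₁ ≠ 0 := by
    intro r₁ hr₁ hur₁
    -- u = 0 on [r₁, 1]
    have hzero_right : ∀ r ∈ Set.Icc r₁ 1, u r = 0 := by
      intro r hr
      have h1 : u r ≤ u r₁ := huanti ⟨hr₁.1, le_of_lt hr₁.2⟩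
        ⟨le_trans hr₁.1 hr.1, hr.2⟩ hr.1
      have h2 : 0 ≤ u r := hunn r ⟨le_trans hr₁.1 hr.1, hr.2⟩
      rw [hur₁] at h1; linarith
    -- u = 0 on [0, r₁]
    have hzero_left : ∀ r ∈ Set.Icc (0:ℝ) r₁, u r = 0 := by
      rcases eq_or_lt_of_le hr₁.1 with h0|h0
      · intro r hr
        have : r = r₁ := le_antisymm hr.2 (by rw [← h0] at hr ⊢; exact hr.1)
        rw [this, hur₁]
      · -- r₁ > 0; show D r₁ = 0
        have hDr₁ : D r₁ = 0 := by
          have hdiff : DifferentiableAt ℝ u r₁ := hudiff r₁ ⟨h0, hr₁.2⟩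
          have hud : UniqueDiffWithinAt ℝ (Set.Icc r₁ 1) r₁ :=
            (uniqueDiffOn_Icc hr₁.2) r₁ (Set.left_mem_Icc.mpr (le_of_lt hr₁.2))
          have h1 : derivWithin u (Set.Icc r₁ 1) r₁ = deriv u r₁ :=
            hdiff.derivWithin hud
          have h2 : derivWithin u (Set.Icc r₁ 1) r₁
              = derivWithin (fun _ => (0:ℝ)) (Set.Icc r₁ 1) r₁ :=
            derivWithin_congr (fun x hx => hzero_right x hx) (by rw [hur₁])
          have h3 : derivWithin (fun _ : ℝ => (0:ℝ)) (Set.Icc r₁ 1) r₁ = 0 :=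
            congrFun (derivWithin_const (Set.Icc r₁ 1) (0:ℝ)) r₁
          rw [hDeq r₁ ⟨h0, hr₁.2⟩, ← h1, h2, h3]
        have hgr₁ : g r₁ = 0 := by
          simp [hg, hDr₁, phi_zero']
        -- g = 0 on (0, r₁)
        have hgzero : ∀ x ∈ Set.Ioo (0:ℝ) r₁, g x = 0 := by
          intro x hx
          have hxI : x ∈ Set.Icc (0:ℝ) 1 :=
            ⟨le_of_lt hx.1, le_of_lt (lt_of_lt_of_le hx.2 (le_of_lt hr₁.2))⟩
          have h1 : g x ≤ g 0 := hganti (Set.left_mem_Icc.mpr zero_le_one) hxI (le_of_lt hx.1)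
          have h2 : g r₁ ≤ g x := hganti hxI ⟨hr₁.1, le_of_lt hr₁.2⟩ (le_of_lt hx.2)
          rw [hg0] at h1; rw [hgr₁] at h2; linarith
        -- deriv u = 0 on (0, r₁)
        have hderivz : ∀ x ∈ Set.Ioo (0:ℝ) r₁, deriv u x = 0 := by
          intro x hx
          have hxI : x ∈ Set.Ioo (0:ℝ) 1 := ⟨hx.1, lt_of_lt_of_le hx.2 (le_of_lt hr₁.2)⟩
          have hxpow : (0:ℝ) < x ^ (N-1) := pow_pos hx.1 _
          have hphix : phi p (D x) = 0 := by
            have hx0 := hgzero x hx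
            rw [hg] at hx0
            exact (mul_eq_zero.mp hx0).resolve_left (ne_of_gt hxpow)
          have hDx := eq_zero_of_phi_eq_zero p hphix
          rw [← hDeq x hxI, hDx]
        -- u monotone on [0, r₁]
        have hIccsub : Set.Icc (0:ℝ) r₁ ⊆ Set.Icc 0 1 :=
          Set.Icc_subset_Icc le_rfl (le_of_lt hr₁.2)
        have hdiffsub : ∀ x ∈ Set.Ioo (0:ℝ) r₁, DifferentiableAt ℝ u x :=
          fun x hx => hudiff x ⟨hx.1, lt_of_lt_of_le hx.2 (le_of_lt hr₁.2)⟩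
        have hmono : MonotoneOn u (Set.Icc 0 r₁) := by
          apply monotoneOn_of_deriv_nonneg (convex_Icc 0 r₁) (hucont.mono hIccsub)
          · rw [interior_Icc]; exact fun x hx => (hdiffsub x hx).differentiableWithinAt
          · rw [interior_Icc]; intro x hx; rw [hderivz x hx]
        intro r hr
        have h1 : u r ≤ u r₁ := hmono hr (Set.right_mem_Icc.mpr hr₁.1) hr.2
        have h2 : 0 ≤ u r := hunn r (hIccsub hr)
        rw [hur₁] at h1; linarith
    -- u ≡ 0, contradicting nontriviality
    obtain ⟨r₀, hr₀, hur₀⟩ := hnt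
    rcases le_total r₀ r₁ with h|h
    · exact hur₀ (hzero_left r₀ ⟨hr₀.1, h⟩)
    · exact hur₀ (hzero_right r₀ ⟨h, hr₀.2⟩)
  -- u > 0 on [0,1)
  have hupos : ∀ r ∈ Set.Ico (0:ℝ) 1, 0 < u r := by
    intro r hr
    exact lt_of_le_of_ne (hunn r ⟨hr.1, le_of_lt hr.2⟩) (Ne.symm (hkey r hr))
  refine ⟨hupos, hDle, ?_⟩
  -- g strictly decreasing on [1/2, 1]
  have hsub : Set.Icc (1/2 : ℝ) 1 ⊆ Set.Icc 0 1 := Set.Icc_subset_Icc (by norm_num) le_rfl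
  have hstrict : StrictAntiOn g (Set.Icc (1/2 : ℝ) 1) := by
    apply strictAntiOn_of_deriv_neg (convex_Icc _ _) (hgcont.mono hsub)
    rw [interior_Icc]
    intro x hx
    have hx01 : x ∈ Set.Ioo (0:ℝ) 1 := ⟨by linarith [hx.1], hx.2⟩
    rw [hgderiv x hx01]
    have h1 : (0:ℝ) < x ^ (N-1) := pow_pos hx01.1 _
    have h2 : 0 < f x (u x) := hf_pos x ⟨le_of_lt hx01.1, le_of_lt hx01.2⟩ _
      (ne_of_gt (hupos x ⟨le_of_lt hx01.1, hx01.2⟩))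
    have h3 := mul_pos (mul_pos hlam h1) h2
    linarith
  have hg1lt : g 1 < 0 := by
    have h1 : g 1 < g (1/2) := hstrict (by constructor <;> norm_num)
      (by constructor <;> norm_num) (by norm_num)
    have h2 : g (1/2) ≤ g 0 := hganti (Set.left_mem_Icc.mpr zero_le_one)
      (by constructor <;> norm_num) (by norm_num)
    rw [hg0] at h2; linarith
  have hph1 : phi p (D 1) < 0 := by
    rw [hg] at hg1lt
    simpa using hg1lt
  exact lt_zero_of_phi_neg p hph1
end
end
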